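/- There exist noncongruent convex bodies K and L in ℝⁿ, each containing the closed Euclidean ball of radius t > 0 in its interior, such that for all 1 ≤ i ≤ n and every unit vector ξ, the intrinsic volumes of the slab truncations agree: V_i(K ∩ S_t(ξ)) = V_i(L ∩ S_t(ξ)), where S_t(ξ) = {x : |⟨x,ξ⟩| ≤ t}. -/

import Mathlib

open Set MeasureTheory Pointwise RealInnerProductSpace

/-- The volume of the `j`-dimensional Euclidean unit ball. -/
noncomputable def kball (j : ℕ) : ℝ :=
  (volume (Metric.closedBall (0 : EuclideanSpace ℝ (Fin j)) 1)).toReal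

/-- `Vfun` is the family of intrinsic volumes: it satisfies Steiner's formula
`vol_n(A + ε B₂ⁿ) = ∑_{i=0}^n κ_{n-i} V_i(A) ε^{n-i}` for every nonempty compact
convex set `A` and every `ε ≥ 0`. -/
def IsIntrinsicVolumes {n : ℕ} (Vfun : ℕ → Set (EuclideanSpace ℝ (Fin n)) → ℝ) : Prop :=
  ∀ A : Set (EuclideanSpace ℝ (Fin n)), IsCompact A → Convex ℝ A → A.Nonempty →
    ∀ ε : ℝ, 0 ≤ ε →
      (volume (A + ε • Metric.closedBall (0 : EuclideanSpace ℝ (Fin n)) 1)).toReal =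
        ∑ i ∈ Finset.range (n + 1), kball (n - i) * Vfun i A * ε ^ (n - i)

/-- The slab of width `2t` perpendicular to `ξ`. -/
def slab {n : ℕ} (t : ℝ) (ξ : EuclideanSpace ℝ (Fin n)) : Set (EuclideanSpace ℝ (Fin n)) :=
  {x : EuclideanSpace ℝ (Fin n) | |⟪x, ξ⟫| ≤ t}

/-!
`K` and `L` are the ball of radius `10` with two disjoint caps cut off, by the hyperplanes
`⟪x, u⟫ = 19/2` and `⟪x, ±v⟫ = 19/2`, where `⟪u, v⟫ = 3/5`. Put `A = B ∩ S` for a centrally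
symmetric closed convex `S`, such as a slab. Since the caps are disjoint, `A ∩ H_u` and `A ∩ H_v`
have convex union `A`, so Minkowski addition of a convex `M` commutes with their intersection,
and inclusion–exclusion gives
`vol(K ∩ S + M) = vol(A ∩ H_u + M) + vol(A ∩ H_v + M) - vol(A + M)`.
For `L` the middle term is replaced by `vol(A ∩ H_{-v} + M)`, equal to it by central symmetry.
Taking `M = εB` for all `ε ≥ 0`, Steiner's formula turns equal parallel volumes into equal
intrinsic volumes.

An isometry between `K` and `L` maps an antipodal pair of boundary points of `K` to one of `L`,
so by Mazur–Ulam it fixes the centre and is linear; it would then carry the cap directions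
`u, v` (at angle `arccos (3/5)`) close to the cap directions `u, -v` (at angle `arccos (-3/5)`).
-/

section MinkowskiSum

variable {E : Type*} [AddCommGroup E] [Module ℝ E] [TopologicalSpace E] [IsTopologicalAddGroup E]
  [ContinuousSMul ℝ E]

open Filter Topology in
/-- Given `c + m₁ = d + m₂`, the last point `p` of the segment `[c, d]` that lies in `C` also
lies in `D`, and `p` plus the matching convex combination of `m₁, m₂` is `c + m₁`. -/
theorem inter_add_eq_of_convex_union {C D M : Set E} (hC : IsClosed C) (hD : IsClosed D)
    (hCD : Convex ℝ (C ∪ D)) (hM : Convex ℝ M) :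
    (C ∩ D) + M = (C + M) ∩ (D + M) := by
  refine Subset.antisymm
    (fun x ⟨e, he, m, hm, hx⟩ => ⟨⟨e, he.1, m, hm, hx⟩, ⟨e, he.2, m, hm, hx⟩⟩) ?_
  rintro x ⟨⟨c, hc, m₁, hm₁, rfl⟩, ⟨d, hd, m₂, hm₂, hx : d + m₂ = c + m₁⟩⟩
  set φ : ℝ → E := fun s => (1 - s) • c + s • d
  have hφ : Continuous φ := by fun_prop
  have hseg : ∀ s ∈ Icc (0 : ℝ) 1, φ s ∈ C ∪ D := fun s hs =>
    hCD (mem_union_left _ hc) (mem_union_right _ hd) (by linarith [hs.2]) hs.1 (by ring)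
  set S : Set ℝ := Icc 0 1 ∩ φ ⁻¹' C
  have hS : IsClosed S := isClosed_Icc.inter (hC.preimage hφ)
  have hSbdd : BddAbove S := ⟨1, fun s hs => hs.1.2⟩
  have hs₀S : sSup S ∈ S := hS.csSup_mem ⟨0, ⟨le_rfl, zero_le_one⟩, by simpa [φ] using hc⟩ hSbdd
  set s₀ := sSup S
  have hs₀D : φ s₀ ∈ D := by
    rcases hs₀S.1.2.eq_or_lt with h1 | h1
    · simpa [φ, h1] using hd
    have hright : ∀ s ∈ Ioc s₀ 1, φ s ∈ D := fun s hs =>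
      (hseg s ⟨hs₀S.1.1.trans hs.1.le, hs.2⟩).resolve_left fun hsC =>
        (le_csSup hSbdd ⟨⟨hs₀S.1.1.trans hs.1.le, hs.2⟩, hsC⟩).not_gt hs.1
    have : (𝓝[Ioc s₀ 1] s₀).NeBot := by
      rw [← mem_closure_iff_nhdsWithin_neBot, closure_Ioc h1.ne]
      exact ⟨le_rfl, h1.le⟩
    exact hD.mem_of_tendsto hφ.continuousWithinAt.tendsto
      (eventually_of_mem self_mem_nhdsWithin hright)
  refine ⟨φ s₀, ⟨hs₀S.2, hs₀D⟩, (1 - s₀) • m₁ + s₀ • m₂,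
    hM hm₁ hm₂ (by linarith [hs₀S.1.2]) hs₀S.1.1 (by ring), ?_⟩
  calc φ s₀ + ((1 - s₀) • m₁ + s₀ • m₂) = (1 - s₀) • (c + m₁) + s₀ • (d + m₂) := by
        simp only [φ]; module
    _ = c + m₁ := by rw [hx]; module

variable [T2Space E] [MeasurableSpace E] [BorelSpace E]

theorem measure_inter_add_add_measure_union_add (μ : Measure E) {C D M : Set E}
    (hC : IsCompact C) (hD : IsCompact D) (hCD : Convex ℝ (C ∪ D))
    (hM : IsCompact M) (hMc : Convex ℝ M) :
    μ ((C ∩ D) + M) + μ ((C ∪ D) + M) = μ (C + M) + μ (D + M) := by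
  rw [inter_add_eq_of_convex_union hC.isClosed hD.isClosed hCD hMc, union_add, add_comm,
    measure_union_add_inter _ (hD.add hM).isClosed.measurableSet]

theorem measure_inter_inter_add_eq_inter_inter_neg_add (μ : Measure E) [μ.IsNegInvariant]
    [IsFiniteMeasureOnCompacts μ] {A P Q M : Set E} (hA : IsCompact A) (hAc : Convex ℝ A)
    (hAneg : -A = A) (hP : IsClosed P) (hQ : IsClosed Q)
    (hAQ : A ⊆ P ∪ Q) (hAQ' : A ⊆ P ∪ -Q)
    (hM : IsCompact M) (hMc : Convex ℝ M) (hMneg : -M = M) :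
    μ (A ∩ P ∩ Q + M) = μ (A ∩ P ∩ -Q + M) := by
  have incl_excl : ∀ Q' : Set E, IsClosed Q' → A ⊆ P ∪ Q' →
      μ (A ∩ P ∩ Q' + M) + μ (A + M) = μ (A ∩ P + M) + μ (A ∩ Q' + M) := by
    intro Q' hQ' hAQ'
    have hunion : A ∩ P ∪ A ∩ Q' = A := by rw [← inter_union_distrib_left, inter_eq_left.2 hAQ']
    have h := measure_inter_add_add_measure_union_add μ (hA.inter_right hP) (hA.inter_right hQ')
      (by rwa [hunion]) hM hMc
    rwa [hunion, ← inter_inter_distrib_left, ← inter_assoc] at h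
  have hrefl : μ (A ∩ -Q + M) = μ (A ∩ Q + M) := by
    rw [show A ∩ -Q + M = -(A ∩ Q + M) by rw [neg_add, inter_neg, hAneg, hMneg],
      Measure.measure_neg]
  have hfin : μ (A + M) ≠ ⊤ := (hA.add hM).measure_lt_top.ne
  refine (ENNReal.add_left_inj hfin).1 ?_
  rw [incl_excl Q hQ hAQ, incl_excl (-Q) hQ.neg hAQ', hrefl]

end MinkowskiSum

open Polynomial in
theorem eq_of_forall_nonneg_sum_mul_pow_sub_eq {n : ℕ} {f g : ℕ → ℝ}
    (h : ∀ ε : ℝ, 0 ≤ ε → ∑ i ∈ Finset.range (n + 1), f i * ε ^ (n - i)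
      = ∑ i ∈ Finset.range (n + 1), g i * ε ^ (n - i))
    {i : ℕ} (hi : i ≤ n) : f i = g i := by
  let P : (ℕ → ℝ) → ℝ[X] := fun a => ∑ j ∈ Finset.range (n + 1), C (a (n - j)) * X ^ j
  have hP : ∀ a : ℕ → ℝ, ∀ ε : ℝ,
      (P a).eval ε = ∑ i ∈ Finset.range (n + 1), a i * ε ^ (n - i) := fun a ε => by
    simp only [P, eval_finsetSum, eval_mul, eval_C, eval_pow, eval_X]
    rw [eq_comm, ← Finset.sum_range_reflect]
    refine Finset.sum_congr rfl fun j hj => ?_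
    rw [Nat.add_sub_cancel, Nat.sub_sub_self (Finset.mem_range_succ_iff.1 hj)]
  have hcoeff : ∀ a : ℕ → ℝ, (P a).coeff (n - i) = a i := fun a => by
    simp [P, Nat.sub_sub_self hi]
  have hPQ : P f = P g := eq_of_infinite_eval_eq _ _ <|
    (Set.Ici_infinite 0).mono fun ε hε => by simp only [mem_ofPred_eq, hP, h ε hε]
  rw [← hcoeff f, ← hcoeff g, hPQ]

theorem kball_pos (j : ℕ) : 0 < kball j :=
  ENNReal.toReal_pos (Metric.measure_closedBall_pos _ _ one_pos).ne'
    (isCompact_closedBall _ _).measure_lt_top.ne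

theorem IsIntrinsicVolumes.eq_of_volume_add_smul_closedBall_eq {n : ℕ}
    {Vfun : ℕ → Set (EuclideanSpace ℝ (Fin n)) → ℝ} (hV : IsIntrinsicVolumes Vfun)
    {A B : Set (EuclideanSpace ℝ (Fin n))}
    (hA : IsCompact A) (hAc : Convex ℝ A) (hAne : A.Nonempty)
    (hB : IsCompact B) (hBc : Convex ℝ B) (hBne : B.Nonempty)
    (h : ∀ ε : ℝ, 0 ≤ ε → volume (A + ε • Metric.closedBall 0 1) =
      volume (B + ε • Metric.closedBall 0 1))
    {i : ℕ} (hi : i ≤ n) : Vfun i A = Vfun i B :=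
  mul_left_cancel₀ (kball_pos (n - i)).ne' <|
    eq_of_forall_nonneg_sum_mul_pow_sub_eq (f := fun j => kball (n - j) * Vfun j A)
      (g := fun j => kball (n - j) * Vfun j B) (fun ε hε => by
      rw [← hV A hA hAc hAne ε hε, ← hV B hB hBc hBne ε hε, h ε hε]) hi

section CapBody

variable {F : Type*} [NormedAddCommGroup F] [InnerProductSpace ℝ F]

theorem isLinearMap_inner_left (u : F) : IsLinearMap ℝ fun x : F => ⟪x, u⟫ :=
  ⟨fun x y => inner_add_left x y u, fun c x => real_inner_smul_left x u c⟩

def halfSpace (u : F) (r : ℝ) : Set F := {x | ⟪x, u⟫ ≤ r}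

theorem isClosed_halfSpace (u : F) (r : ℝ) : IsClosed (halfSpace u r) :=
  isClosed_le (by fun_prop) continuous_const

theorem convex_halfSpace (u : F) (r : ℝ) : Convex ℝ (halfSpace u r) :=
  convex_halfSpace_le (isLinearMap_inner_left u) r

theorem neg_halfSpace (u : F) (r : ℝ) : -halfSpace u r = halfSpace (-u) r := by
  ext x
  simp [halfSpace, inner_neg_left, inner_neg_right]

/-- A cap `⟪x, u⟫ > 19/2` of the ball of radius `10` is seen from the origin under the angle
`arccos (19/20) ≈ 18°` around `u`, so for unit normals with `|⟪u, v⟫| ≤ 4/5` (an angle between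
`37°` and `143°`) the two removed caps are disjoint, both for `v` and for `-v`. -/
def capBody (u v : F) : Set F :=
  Metric.closedBall 0 10 ∩ halfSpace u (19 / 2) ∩ halfSpace v (19 / 2)

theorem isCompact_capBody [ProperSpace F] (u v : F) : IsCompact (capBody u v) :=
  ((isCompact_closedBall 0 10).inter_right (isClosed_halfSpace u _)).inter_right
    (isClosed_halfSpace v _)

theorem convex_capBody (u v : F) : Convex ℝ (capBody u v) :=
  ((convex_closedBall 0 10).inter (convex_halfSpace u _)).inter (convex_halfSpace v _)

theorem zero_mem_capBody (u v : F) : (0 : F) ∈ capBody u v :=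
  ⟨⟨Metric.mem_closedBall_self (by norm_num), by norm_num [halfSpace]⟩, by norm_num [halfSpace]⟩

theorem capBody_subset_closedBall (u v : F) : capBody u v ⊆ Metric.closedBall 0 10 :=
  inter_subset_left.trans inter_subset_left

theorem closedBall_subset_interior_capBody {u v : F} (hu : ‖u‖ ≤ 1) (hv : ‖v‖ ≤ 1) :
    Metric.closedBall 0 1 ⊆ interior (capBody u v) := by
  have hball : Metric.ball (0 : F) (19 / 2) ⊆ capBody u v := fun x hx => by
    rw [mem_ball_zero_iff] at hx
    have hxu := (real_inner_le_norm x u).trans (mul_le_of_le_one_right (norm_nonneg x) hu)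
    have hxv := (real_inner_le_norm x v).trans (mul_le_of_le_one_right (norm_nonneg x) hv)
    exact ⟨⟨mem_closedBall_zero_iff.2 (by linarith), by
      simp only [halfSpace, mem_ofPred_eq]; linarith⟩, by
      simp only [halfSpace, mem_ofPred_eq]; linarith⟩
  exact (Metric.closedBall_subset_ball (by norm_num)).trans
    (interior_maximal hball Metric.isOpen_ball)

/-- If `⟪x, u⟫, ⟪x, v⟫ > 19/2` then `⟪x, u + v⟫ > 19`, while `‖u + v‖² ≤ 18/5` bounds it by
`10 √(18/5) < 19`. -/
theorem closedBall_subset_halfSpace_union {u v : F} (hu : ‖u‖ = 1) (hv : ‖v‖ = 1)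
    (huv : ⟪u, v⟫ ≤ 4 / 5) :
    Metric.closedBall 0 10 ⊆ halfSpace u (19 / 2) ∪ halfSpace v (19 / 2) := by
  intro x hx
  rw [mem_closedBall_zero_iff] at hx
  by_contra h
  simp only [mem_union, halfSpace, mem_ofPred_eq, not_or, not_le] at h
  have hsum : 19 < ⟪x, u + v⟫ := by rw [inner_add_right]; linarith
  have huv_sq : ‖u + v‖ ^ 2 ≤ 18 / 5 := by rw [norm_add_sq_real, hu, hv]; linarith
  have hcs := (real_inner_le_norm x (u + v)).trans
    (mul_le_mul_of_nonneg_right hx (norm_nonneg _))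
  nlinarith [norm_nonneg (u + v)]

variable [MeasurableSpace F] [BorelSpace F] [ProperSpace F]

theorem measure_capBody_inter_add_eq (μ : Measure F) [μ.IsNegInvariant]
    [IsFiniteMeasureOnCompacts μ] {u v : F} (hu : ‖u‖ = 1) (hv : ‖v‖ = 1)
    (huv : |⟪u, v⟫| ≤ 4 / 5) {S M : Set F} (hS : IsClosed S) (hSc : Convex ℝ S) (hSneg : -S = S)
    (hM : IsCompact M) (hMc : Convex ℝ M) (hMneg : -M = M) :
    μ (capBody u v ∩ S + M) = μ (capBody u (-v) ∩ S + M) := by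
  have hcover := closedBall_subset_halfSpace_union hu hv (abs_le.1 huv).2
  have hcover' := closedBall_subset_halfSpace_union hu (by rwa [norm_neg]) (by
    rw [inner_neg_right]; linarith [(abs_le.1 huv).1])
  simp only [capBody, inter_right_comm _ _ S, ← neg_halfSpace v] at hcover' ⊢
  exact measure_inter_inter_add_eq_inter_inter_neg_add μ
    ((isCompact_closedBall 0 10).inter_right hS) ((convex_closedBall 0 10).inter hSc)
    (by rw [inter_neg, neg_closedBall, neg_zero, hSneg]) (isClosed_halfSpace u _)
    (isClosed_halfSpace v _) (inter_subset_left.trans hcover) (inter_subset_left.trans hcover')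
    hM hMc hMneg

end CapBody

section Noncongruence

theorem midpoint_eq_zero_of_dist_eq_two_mul {E : Type*} [NormedAddCommGroup E]
    [NormedSpace ℝ E] [StrictConvexSpace ℝ E] {a b : E} {R : ℝ} (ha : ‖a‖ ≤ R) (hb : ‖b‖ ≤ R)
    (hab : dist a b = 2 * R) : midpoint ℝ a b = 0 := by
  have htri := dist_triangle a 0 b
  rw [dist_zero_right, dist_zero_left] at htri
  refine (eq_midpoint_of_dist_eq_half ?_ ?_).symm <;>
    simp only [dist_zero_right, dist_zero_left] <;> linarith

/-- By Mazur–Ulam, `T` preserves the midpoint `0` of `w` and `-w`. -/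
theorem IsometryEquiv.map_zero_of_norm_map_le {E : Type*} [NormedAddCommGroup E]
    [NormedSpace ℝ E] [StrictConvexSpace ℝ E] (T : E ≃ᵢ E) {w : E} {R : ℝ} (hw : ‖w‖ = R)
    (h₁ : ‖T w‖ ≤ R) (h₂ : ‖T (-w)‖ ≤ R) : T 0 = 0 := by
  rw [← midpoint_self_neg ℝ w, T.map_midpoint, midpoint_self_neg]
  refine midpoint_eq_zero_of_dist_eq_two_mul h₁ h₂ ?_
  rw [T.dist_eq, dist_eq_norm, sub_neg_eq_add, ← two_smul ℝ, norm_smul, hw, Real.norm_two]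

variable {F : Type*} [NormedAddCommGroup F] [InnerProductSpace ℝ F]

theorem norm_sub_lt_of_inner_gt {z a : F} (hz : ‖z‖ = 1) (ha : ‖a‖ = 1)
    (h : 19 / 20 < ⟪z, a⟫) : ‖z - a‖ < 1 / 3 := by
  refine lt_of_pow_lt_pow_left₀ 2 (by norm_num) ?_
  rw [norm_sub_sq_real, hz, ha]
  linarith

theorem smul_notMem_capBody_left {u : F} (hu : ‖u‖ = 1) (v : F) :
    (10 : ℝ) • u ∉ capBody u v := fun h => by
  have := h.1.2
  simp only [halfSpace, mem_ofPred_eq, real_inner_smul_left, real_inner_self_eq_norm_sq,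
    hu] at this
  norm_num at this

theorem smul_notMem_capBody_right (u : F) {v : F} (hv : ‖v‖ = 1) :
    (10 : ℝ) • v ∉ capBody u v := fun h => by
  have := h.2
  simp only [halfSpace, mem_ofPred_eq, real_inner_smul_left, real_inner_self_eq_norm_sq,
    hv] at this
  norm_num at this

theorem norm_sub_lt_or_norm_sub_lt_of_smul_notMem_capBody {z a b : F} (hz : ‖z‖ = 1)
    (ha : ‖a‖ = 1) (hb : ‖b‖ = 1) (h : (10 : ℝ) • z ∉ capBody a b) :
    ‖z - a‖ < 1 / 3 ∨ ‖z - b‖ < 1 / 3 := by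
  simp only [capBody, halfSpace, mem_inter_iff, mem_ofPred_eq, mem_closedBall_zero_iff,
    norm_smul, hz, real_inner_smul_left, not_and_or, not_le] at h
  rcases h with (h | h) | h
  · norm_num at h
  · exact .inl (norm_sub_lt_of_inner_gt hz ha (by linarith))
  · exact .inr (norm_sub_lt_of_inner_gt hz hb (by linarith))

/-- A linear isometry would move the cap directions `u, v` (with `‖u - v‖ = 2/√5`) into the cap
directions `u, -v` (with `‖u + v‖ = 4/√5`), each within distance `1/3`; no case fits. -/
theorem LinearIsometryEquiv.image_capBody_ne (f : F ≃ₗᵢ[ℝ] F) {u v : F} (hu : ‖u‖ = 1)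
    (hv : ‖v‖ = 1) (huv : ⟪u, v⟫ = 3 / 5) : f '' capBody u v ≠ capBody u (-v) := by
  intro hf
  have hnv : ‖-v‖ = 1 := by rw [norm_neg, hv]
  have hcap : ∀ x : F, ‖x‖ = 1 → (10 : ℝ) • x ∉ capBody u v →
      ‖f x - u‖ < 1 / 3 ∨ ‖f x - -v‖ < 1 / 3 := fun x hx hxK =>
    norm_sub_lt_or_norm_sub_lt_of_smul_notMem_capBody (by rw [f.norm_map, hx]) hu hnv
      (by rwa [← hf, ← map_smul, f.injective.mem_set_image])
  have hpq : ‖f u - f v‖ ^ 2 = 4 / 5 := by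
    rw [norm_sub_sq_real, f.inner_map_map, f.norm_map, f.norm_map, hu, hv, huv]; norm_num
  have hpq' : 2 / 3 < ‖f u - f v‖ := by nlinarith [norm_nonneg (f u - f v)]
  have huv' : ‖u - -v‖ = 2 * ‖f u - f v‖ := by
    rw [← sq_eq_sq₀ (norm_nonneg _) (by positivity), mul_pow, hpq, sub_neg_eq_add,
      norm_add_sq_real, hu, hv, huv]
    norm_num
  have t₁ := norm_sub_le_norm_sub_add_norm_sub (f u) u (f v)
  have t₂ := norm_sub_le_norm_sub_add_norm_sub (f u) (-v) (f v)
  have t₃ := norm_sub_le_norm_sub_add_norm_sub u (f u) (-v)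
  have t₄ := norm_sub_le_norm_sub_add_norm_sub (f u) (f v) (-v)
  have t₅ := norm_sub_le_norm_sub_add_norm_sub u (f v) (-v)
  have t₆ := norm_sub_le_norm_sub_add_norm_sub (f v) (f u) (-v)
  rcases hcap u hu (smul_notMem_capBody_left hu v) with hp | hp <;>
    rcases hcap v hv (smul_notMem_capBody_right u hv) with hq | hq <;>
    linarith [norm_sub_rev u (f u), norm_sub_rev u (f v), norm_sub_rev (f u) (f v),
      norm_sub_rev (f v) (-v)]

theorem not_exists_isometryEquiv_image_capBody_eq {u v w : F} (hu : ‖u‖ = 1) (hv : ‖v‖ = 1)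
    (huv : ⟪u, v⟫ = 3 / 5) (hw : ‖w‖ = 10) (hwu : |⟪w, u⟫| ≤ 19 / 2) (hwv : |⟪w, v⟫| ≤ 19 / 2) :
    ¬ ∃ T : F ≃ᵢ F, T '' capBody u v = capBody u (-v) := by
  rintro ⟨T, hT⟩
  have hmem : ∀ x : F, ‖x‖ = 10 → |⟪x, u⟫| ≤ 19 / 2 → |⟪x, v⟫| ≤ 19 / 2 →
      ‖T x‖ ≤ 10 := fun x hx hxu hxv =>
    mem_closedBall_zero_iff.1 <| capBody_subset_closedBall u (-v) <| hT ▸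
      mem_image_of_mem T ⟨⟨mem_closedBall_zero_iff.2 hx.le, (abs_le.1 hxu).2⟩, (abs_le.1 hxv).2⟩
  have h0 : T 0 = 0 := T.map_zero_of_norm_map_le hw (hmem w hw hwu hwv)
    (hmem (-w) (by rwa [norm_neg]) (by rwa [inner_neg_left, abs_neg])
      (by rwa [inner_neg_left, abs_neg]))
  exact (T.toRealLinearIsometryEquivOfMapZero h0).image_capBody_ne hu hv huv hT

end Noncongruence

section Euclidean

variable {n : ℕ}

theorem isClosed_slab (t : ℝ) (ξ : EuclideanSpace ℝ (Fin n)) : IsClosed (slab t ξ) :=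
  isClosed_le (by fun_prop) continuous_const

theorem convex_slab (t : ℝ) (ξ : EuclideanSpace ℝ (Fin n)) : Convex ℝ (slab t ξ) := by
  simp only [slab, abs_le, ofPred_and]
  exact (convex_halfSpace_ge (isLinearMap_inner_left ξ) _).inter
    (convex_halfSpace_le (isLinearMap_inner_left ξ) _)

theorem neg_slab (t : ℝ) (ξ : EuclideanSpace ℝ (Fin n)) : -slab t ξ = slab t ξ := by
  ext x
  simp [slab, inner_neg_left]

theorem zero_mem_slab {t : ℝ} (ht : 0 ≤ t) (ξ : EuclideanSpace ℝ (Fin n)) :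
    (0 : EuclideanSpace ℝ (Fin n)) ∈ slab t ξ := by
  simpa [slab] using ht

theorem exists_inner_eq_three_fifths (hn : 2 ≤ n) :
    ∃ u v w : EuclideanSpace ℝ (Fin n), ‖u‖ = 1 ∧ ‖v‖ = 1 ∧ ⟪u, v⟫ = 3 / 5 ∧
      ‖w‖ = 10 ∧ ⟪w, u⟫ = 0 ∧ ⟪w, v⟫ = 8 := by
  have he : Orthonormal ℝ fun k : Fin n => EuclideanSpace.single k (1 : ℝ) :=
    EuclideanSpace.orthonormal_single
  have hij : (⟨0, by omega⟩ : Fin n) ≠ ⟨1, by omega⟩ := by simp [Fin.ext_iff]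
  obtain ⟨a, b, ha, hb, hab⟩ : ∃ a b : EuclideanSpace ℝ (Fin n), ‖a‖ = 1 ∧ ‖b‖ = 1 ∧ ⟪a, b⟫ = 0 :=
    ⟨_, _, he.1 _, he.1 _, he.inner_eq_zero hij⟩
  have hba : ⟪b, a⟫ = 0 := by rw [real_inner_comm, hab]
  refine ⟨a, (3 / 5 : ℝ) • a + (4 / 5 : ℝ) • b, (10 : ℝ) • b, ha, ?_, ?_, ?_, ?_, ?_⟩
  · rw [← sq_eq_sq₀ (norm_nonneg _) zero_le_one, norm_add_sq_real, norm_smul, norm_smul,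
      real_inner_smul_left, real_inner_smul_right, ha, hb, hab]
    norm_num
  all_goals simp only [inner_add_right, real_inner_smul_left, real_inner_smul_right,
    real_inner_self_eq_norm_sq, norm_smul, ha, hb, hab, hba]
  all_goals norm_num

end Euclidean

theorem exists_noncongruent_equal_intrinsic_volumes_of_slabs {n : ℕ} (hn : 2 ≤ n) :
    ∃ (t : ℝ), 0 < t ∧
    ∃ K L : Set (EuclideanSpace ℝ (Fin n)),
      IsCompact K ∧ Convex ℝ K ∧
      Metric.closedBall (0 : EuclideanSpace ℝ (Fin n)) t ⊆ interior K ∧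
      IsCompact L ∧ Convex ℝ L ∧
      Metric.closedBall (0 : EuclideanSpace ℝ (Fin n)) t ⊆ interior L ∧
      (¬ ∃ T : EuclideanSpace ℝ (Fin n) ≃ᵢ EuclideanSpace ℝ (Fin n), T '' K = L) ∧
      ∀ Vfun : ℕ → Set (EuclideanSpace ℝ (Fin n)) → ℝ, IsIntrinsicVolumes Vfun →
        ∀ i : ℕ, 1 ≤ i → i ≤ n →
          ∀ ξ : EuclideanSpace ℝ (Fin n), ‖ξ‖ = 1 →
            Vfun i (K ∩ slab t ξ) = Vfun i (L ∩ slab t ξ) := by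
  obtain ⟨u, v, w, hu, hv, huv, hw, hwu, hwv⟩ := exists_inner_eq_three_fifths hn
  have hnv : ‖-v‖ = 1 := by rw [norm_neg, hv]
  refine ⟨1, one_pos, capBody u v, capBody u (-v), isCompact_capBody u v, convex_capBody u v,
    closedBall_subset_interior_capBody hu.le hv.le, isCompact_capBody u (-v),
    convex_capBody u (-v), closedBall_subset_interior_capBody hu.le hnv.le,
    not_exists_isometryEquiv_image_capBody_eq hu hv huv hw (by norm_num [hwu])
      (by norm_num [hwv]), ?_⟩
  intro Vfun hV i _ hi ξ _
  have hsection : ∀ v' : EuclideanSpace ℝ (Fin n), IsCompact (capBody u v' ∩ slab 1 ξ) ∧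
      Convex ℝ (capBody u v' ∩ slab 1 ξ) ∧ (capBody u v' ∩ slab 1 ξ).Nonempty := fun v' =>
    ⟨(isCompact_capBody u v').inter_right (isClosed_slab 1 ξ),
      (convex_capBody u v').inter (convex_slab 1 ξ),
      ⟨0, zero_mem_capBody u v', zero_mem_slab zero_le_one ξ⟩⟩
  obtain ⟨hK, hKc, hKne⟩ := hsection v
  obtain ⟨hL, hLc, hLne⟩ := hsection (-v)
  refine hV.eq_of_volume_add_smul_closedBall_eq hK hKc hKne hL hLc hLne (fun ε _ => ?_) hi
  exact measure_capBody_inter_add_eq volume hu hv (by norm_num [huv]) (isClosed_slab 1 ξ)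
    (convex_slab 1 ξ) (neg_slab 1 ξ) ((isCompact_closedBall 0 1).smul ε)
    ((convex_closedBall 0 1).smul ε) (by rw [← smul_set_neg, neg_closedBall, neg_zero])
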